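/- arXiv:1610.07431 — 2 statements merged into one kernel-verified Lean document; each statement's English description precedes it below -/
import Mathlib

section
/- Define f_1(λ) = λ(e^λ - 1)/(e^λ - 1 - λ) for λ > 0. Then f_1 is strictly increasing on (0, ∞). -/
/-!
By the quotient rule, the derivative of `x (e^x - 1) / (e^x - 1 - x)` has numerator
`(e^x - 1)^2 - x^2 e^x = e^x ((2 sinh (x/2))^2 - x^2)`, which is positive for `x > 0`
because `sinh y > y` for `y > 0`.
-/

open Real

lemma sq_mul_exp_lt_sq_exp_sub_one {x : ℝ} (hx : 0 < x) : x ^ 2 * exp x < (exp x - 1) ^ 2 := by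
  have hsinh : x / 2 < sinh (x / 2) := self_lt_sinh_iff.2 (half_pos hx)
  have hexp : exp x - 1 = 2 * sinh (x / 2) * exp (x / 2) := by
    rw [sinh_eq, mul_div_cancel₀ _ two_ne_zero, sub_mul, ← exp_add, ← exp_add, add_halves,
      neg_add_cancel, exp_zero]
  have hlt : x * exp (x / 2) < exp x - 1 := by
    rw [hexp]
    exact mul_lt_mul_of_pos_right (by linarith) (exp_pos _)
  calc x ^ 2 * exp x = (x * exp (x / 2)) ^ 2 := by rw [mul_pow, ← exp_nat_mul]; ring_nf
    _ < (exp x - 1) ^ 2 := pow_lt_pow_left₀ hlt (by positivity) two_ne_zero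

lemma exp_sub_one_sub_pos {x : ℝ} (hx : x ≠ 0) : 0 < exp x - 1 - x := by
  linarith [add_one_lt_exp hx]

lemma hasDerivAt_mul_exp_sub_one_div {x : ℝ} (hx : x ≠ 0) :
    HasDerivAt (fun l : ℝ => l * (exp l - 1) / (exp l - 1 - l))
      (((exp x - 1) ^ 2 - x ^ 2 * exp x) / (exp x - 1 - x) ^ 2) x := by
  have hnum : HasDerivAt (fun l : ℝ => l * (exp l - 1)) (1 * (exp x - 1) + x * exp x) x :=
    (hasDerivAt_id x).mul ((hasDerivAt_exp x).sub_const 1)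
  have hden : HasDerivAt (fun l : ℝ => exp l - 1 - l) (exp x - 1) x :=
    ((hasDerivAt_exp x).sub_const 1).sub (hasDerivAt_id' x)
  refine (hnum.div hden (exp_sub_one_sub_pos hx).ne').congr_deriv ?_
  ring

theorem stmt_3 :
    StrictMonoOn (fun l : ℝ => l * (Real.exp l - 1) / (Real.exp l - 1 - l))
      (Set.Ioi 0) := by
  apply strictMonoOn_of_hasDerivWithinAt_pos (convex_Ioi 0)
  · exact fun x hx =>
      (hasDerivAt_mul_exp_sub_one_div (ne_of_gt hx)).continuousAt.continuousWithinAt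
  · intro x hx
    rw [interior_Ioi] at hx
    exact (hasDerivAt_mul_exp_sub_one_div (ne_of_gt hx)).hasDerivWithinAt
  · intro x hx
    rw [interior_Ioi] at hx
    exact div_pos (sub_pos.2 (sq_mul_exp_lt_sq_exp_sub_one hx))
      (pow_pos (exp_sub_one_sub_pos (ne_of_gt hx)) 2)
end

section
/- Let k ≥ 3, λ_k the unique positive solution of f_1(λ)=k with f_1(λ)=λ(e^λ-1)/(e^λ-1-λ), ρ_k = k(1-e^{-λ_k})^{k-1}/λ_k and θ_k = 1 - (1-e^{-λ_k})^k. With γ = k/ρ_k and u = (1-θ_k)^{1/k} = 1-e^{-λ_k}, define y_2(θ_k,ρ_k) = (k/γ)(1 - e^{-γ u^{k-1}} - γ u^{k-1} e^{-γ u^{k-1}}). Then y_2(θ_k, ρ_k) = 1 - θ_k. -/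
/-!
Write `a = 1 - e^{-λ}`, so that `1 - θ = a^k`, `u = a` and `γ u^{k-1} = λ`. Multiplying
`f₁(λ) = k` by `e^{-λ}` gives `k (1 - e^{-λ} - λ e^{-λ}) = λ a`, and then
`y₂ = (a^{k-1} / λ) · k (1 - e^{-λ} - λ e^{-λ}) = a^k`.
-/

open Real

/-- The mean of a Poisson(`l`) variable conditioned to be at least `2`. -/
noncomputable def f₁ (l : ℝ) : ℝ := l * (exp l - 1) / (exp l - 1 - l)

lemma exp_sub_one_sub_pos_s16 {l : ℝ} (hl : l ≠ 0) : 0 < exp l - 1 - l := by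
  linarith [add_one_lt_exp hl]

lemma one_sub_exp_neg_pos {l : ℝ} (hl : 0 < l) : 0 < 1 - exp (-l) := by
  linarith [exp_lt_one_iff.mpr (neg_lt_zero.mpr hl)]

lemma f₁_pos {l : ℝ} (hl : 0 < l) : 0 < f₁ l :=
  div_pos (mul_pos hl (by linarith [add_one_lt_exp hl.ne'])) (exp_sub_one_sub_pos_s16 hl.ne')

lemma f₁_mul_one_sub_exp_neg_sub_mul_exp_neg {l : ℝ} (hl : 0 < l) :
    f₁ l * (1 - exp (-l) - l * exp (-l)) = l * (1 - exp (-l)) := by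
  have hE := (exp_sub_one_sub_pos_s16 hl.ne').ne'
  rw [f₁, exp_neg]
  field_simp

theorem stmt_16_general (k : ℕ) (lk : ℝ) (hl : 0 < lk)
    (heq : lk * (Real.exp lk - 1) / (Real.exp lk - 1 - lk) = k) :
    let ρk : ℝ := k * (1 - Real.exp (-lk)) ^ (k - 1) / lk
    let θk : ℝ := 1 - (1 - Real.exp (-lk)) ^ k
    let γ : ℝ := k / ρk
    let u : ℝ := (1 - θk) ^ (1 / (k : ℝ))
    (k / γ) * (1 - Real.exp (-(γ * u ^ (k - 1))) -
        γ * u ^ (k - 1) * Real.exp (-(γ * u ^ (k - 1)))) = 1 - θk := by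
  intro ρk θk γ u
  change f₁ lk = k at heq
  have hk : (k : ℝ) ≠ 0 := heq ▸ (f₁_pos hl).ne'
  set a := 1 - exp (-lk) with ha_def
  have ha : 0 < a := one_sub_exp_neg_pos hl
  have hθ : 1 - θk = a ^ k := sub_sub_cancel _ _
  have hu : u = a := by
    rw [← pow_rpow_inv_natCast ha.le (n := k) (by exact_mod_cast hk), ← one_div, ← hθ]
  have hρ : k / γ = ρk := div_div_cancel₀ hk
  have hγu : γ * u ^ (k - 1) = lk := by
    rw [hu]
    change k / (k * a ^ (k - 1) / lk) * a ^ (k - 1) = lk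
    field_simp
  have hk_succ : k - 1 + 1 = k := Nat.succ_pred_eq_of_ne_zero (by exact_mod_cast hk)
  rw [hρ, hγu, hθ, ← hk_succ, pow_succ]
  calc k * a ^ (k - 1) / lk * (1 - exp (-lk) - lk * exp (-lk))
      = a ^ (k - 1) * (f₁ lk * (1 - exp (-lk) - lk * exp (-lk))) / lk := by rw [heq]; ring
    _ = a ^ (k - 1) * a := by
      rw [f₁_mul_one_sub_exp_neg_sub_mul_exp_neg hl, ← ha_def]; field_simp

theorem stmt_16 (k : ℕ) (hk : 3 ≤ k) (lk : ℝ) (hl : 0 < lk)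
    (heq : lk * (Real.exp lk - 1) / (Real.exp lk - 1 - lk) = k) :
    let ρk : ℝ := k * (1 - Real.exp (-lk)) ^ (k - 1) / lk
    let θk : ℝ := 1 - (1 - Real.exp (-lk)) ^ k
    let γ : ℝ := k / ρk
    let u : ℝ := (1 - θk) ^ (1 / (k : ℝ))
    (k / γ) * (1 - Real.exp (-(γ * u ^ (k - 1))) -
        γ * u ^ (k - 1) * Real.exp (-(γ * u ^ (k - 1)))) = 1 - θk :=
  stmt_16_general k lk hl heq
end
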